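/- Let Ω be a probability space with measure π, let X and Y be random variables on Ω taking finitely many values, let E ⊆ Ω be an event with π(E) > 0, and let η be a probability distribution on the value set of X such that η(x) > 0 whenever π(X = x) > 0. Then E_{y ∼ π(Y | E)} [ D( law of X given (Y = y and E) ∥ η ) ] ≤ (1/π(E)) · ( E_{y ∼ π(Y)} [ D( law of X given Y = y ∥ η ) ] + H(π(E)) ). -/
import Mathlib


open MeasureTheory ProbabilityTheory

/-- Kullback–Leibler divergence (base-2 logarithms) between finitely supported
distributions given as real-valued mass functions: `D(p ∥ q) = Σ_x p(x)·log₂(p(x)/q(x))`. -/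
noncomputable def klDiv2 {S : Type*} [Fintype S] (p q : S → ℝ) : ℝ :=
  ∑ s : S, p s * Real.logb 2 (p s / q s)

/-- The binary entropy function, `H(p) = p·log₂(1/p) + (1−p)·log₂(1/(1−p))`,
with `H 0 = H 1 = 0` under the conventions of `Real.logb`. -/
noncomputable def binEnt (p : ℝ) : ℝ :=
  p * Real.logb 2 (1 / p) + (1 - p) * Real.logb 2 (1 / (1 - p))

/-- The log-sum inequality. -/
lemma logsum_aux {T : Type*} [Fintype T] (A B : T → ℝ) (hA : ∀ y, 0 ≤ A y)
    (hB : ∀ y, 0 ≤ B y) (hpos : ∀ y, A y ≠ 0 → 0 < B y) :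
    ∑ y, A y * Real.logb 2 (B y / A y) ≤
      (∑ y, A y) * Real.logb 2 ((∑ y, B y) / (∑ y, A y)) := by
  set p := ∑ y, A y with hp
  set q := ∑ y, B y with hq
  have hl2 : (0:ℝ) < Real.log 2 := Real.log_pos (by norm_num)
  have hpge : (0:ℝ) ≤ p := Finset.sum_nonneg fun y _ => hA y
  rcases hpge.lt_or_eq with hp0 | hp0
  · have hq0 : 0 < q := by
      obtain ⟨y0, -, hy0⟩ := Finset.exists_ne_zero_of_sum_ne_zero (hp ▸ hp0.ne')
      exact lt_of_lt_of_le (hpos y0 hy0)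
        (Finset.single_le_sum (fun y _ => hB y) (Finset.mem_univ y0))
    have key : ∀ y, A y * Real.logb 2 (B y / A y) ≤
        A y * Real.logb 2 (q / p) + (B y * p / q - A y) / Real.log 2 := by
      intro y
      by_cases h0 : A y = 0
      · rw [h0]
        simp only [zero_mul, zero_add, sub_zero]
        exact div_nonneg (div_nonneg (mul_nonneg (hB y) hpge) hq0.le) hl2.le
      · have h0' : 0 < A y := (hA y).lt_of_ne (Ne.symm h0)
        have hBy := hpos y h0
        have hlog : Real.logb 2 (B y / A y) - Real.logb 2 (q / p) =
            Real.logb 2 (B y * p / (A y * q)) := by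
          rw [← Real.logb_div (by positivity) (by positivity)]
          congr 1
          field_simp
        have hle : Real.logb 2 (B y * p / (A y * q)) ≤
            (B y * p / (A y * q) - 1) / Real.log 2 := by
          rw [Real.logb, div_le_div_iff_of_pos_right hl2]
          exact Real.log_le_sub_one_of_pos (by positivity)
        have : A y * (Real.logb 2 (B y / A y) - Real.logb 2 (q / p)) ≤
            (B y * p / q - A y) / Real.log 2 := by
          rw [hlog]
          calc A y * Real.logb 2 (B y * p / (A y * q))
              ≤ A y * ((B y * p / (A y * q) - 1) / Real.log 2) :=
                mul_le_mul_of_nonneg_left hle h0'.le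
            _ = (B y * p / q - A y) / Real.log 2 := by
                field_simp
        nlinarith [this]
    calc ∑ y, A y * Real.logb 2 (B y / A y)
        ≤ ∑ y, (A y * Real.logb 2 (q / p) + (B y * p / q - A y) / Real.log 2) :=
          Finset.sum_le_sum fun y _ => key y
      _ = p * Real.logb 2 (q / p) + (q * p / q - p) / Real.log 2 := by
          rw [Finset.sum_add_distrib, ← Finset.sum_mul, ← hp]
          congr 1
          rw [← Finset.sum_div, div_left_inj' hl2.ne']
          rw [Finset.sum_sub_distrib, ← Finset.sum_div, ← Finset.sum_mul, ← hq, ← hp]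
      _ = p * Real.logb 2 (q / p) := by
          rw [mul_comm q p, mul_div_assoc, div_self hq0.ne', mul_one, sub_self, zero_div,
            add_zero]
  · have hall : ∀ y ∈ Finset.univ, A y = 0 := by
      refine (Finset.sum_eq_zero_iff_of_nonneg fun y _ => hA y).1 ?_
      rw [← hp]; exact hp0.symm
    have h1 : ∑ y, A y * Real.logb 2 (B y / A y) = 0 :=
      Finset.sum_eq_zero fun y hy => by rw [hall y hy, zero_mul]
    rw [h1, ← hp0, zero_mul]

/-- Gibbs' inequality: nonnegativity of KL divergence, in sum form. -/
lemma gibbs_aux {S : Type*} [Fintype S] (c e : S → ℝ) (hc : ∀ s, 0 ≤ c s)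
    (he : ∀ s, 0 ≤ e s) (he1 : (∑ s, e s) = 1) (hpos : ∀ s, c s ≠ 0 → 0 < e s) :
    0 ≤ ∑ s, c s * Real.logb 2 (c s / (∑ t, c t) / e s) := by
  set C := ∑ t, c t with hC
  have hC0 : 0 ≤ C := Finset.sum_nonneg fun s _ => hc s
  have hrw : ∀ s, c s * Real.logb 2 (c s / C / e s)
      = -(c s * Real.logb 2 (C * e s / c s)) := by
    intro s
    have : c s / C / e s = (C * e s / c s)⁻¹ := by
      rw [inv_div]
      ring
    rw [this, Real.logb_inv, mul_neg]
  by_cases hCz : C = 0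
  · have hall : ∀ s ∈ Finset.univ, c s = 0 := by
      refine (Finset.sum_eq_zero_iff_of_nonneg fun s _ => hc s).1 ?_
      rw [← hC]; exact hCz
    refine le_of_eq (Finset.sum_eq_zero fun s hs => ?_).symm
    rw [hall s hs, zero_mul]
  · have hCpos : 0 < C := hC0.lt_of_ne (Ne.symm hCz)
    simp only [hrw]
    rw [Finset.sum_neg_distrib, neg_nonneg]
    have hls := logsum_aux c (fun s => C * e s) hc
      (fun s => mul_nonneg hC0 (he s)) (fun s hs => mul_pos hCpos (hpos s hs))
    have hsum : ∑ s, C * e s = C := by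
      rw [← Finset.mul_sum, he1, mul_one]
    rw [hsum, ← hC, div_self hCz, Real.logb_one, mul_zero] at hls
    exact hls

/-- Pointwise inequality for the conditioning argument. -/
lemma pt_aux (a c A C B e : ℝ) (ha : 0 ≤ a) (hc : 0 ≤ c)
    (hA : a ≠ 0 → 0 < A) (hC : c ≠ 0 → 0 < C)
    (hB : a + c ≠ 0 → 0 < B) (he : a + c ≠ 0 → 0 < e) :
    a * Real.logb 2 (a / A / e) + c * Real.logb 2 (c / C / e) ≤
      (a + c) * Real.logb 2 ((a + c) / B / e) + a * Real.logb 2 (B / A) +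
        c * Real.logb 2 (B / C) := by
  by_cases ha0 : a = 0
  · by_cases hc0 : c = 0
    · simp [ha0, hc0]
    · have hc' : 0 < c := (hc).lt_of_ne (Ne.symm hc0)
      have hB' := hB (by rw [ha0, zero_add]; exact hc0)
      have he' := he (by rw [ha0, zero_add]; exact hc0)
      have hC' := hC hc0
      rw [ha0]
      simp only [zero_mul, zero_add]
      have : Real.logb 2 (c / B / e) + Real.logb 2 (B / C) = Real.logb 2 (c / C / e) := by
        rw [← Real.logb_mul (by positivity) (by positivity)]
        congr 1
        field_simp
      rw [← this, mul_add]
      linarith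
  · have ha' : 0 < a := ha.lt_of_ne (Ne.symm ha0)
    have hA' := hA ha0
    have hB' := hB (by positivity)
    have he' := he (by positivity)
    by_cases hc0 : c = 0
    · rw [hc0]
      simp only [zero_mul, add_zero]
      have : Real.logb 2 (a / B / e) + Real.logb 2 (B / A) = Real.logb 2 (a / A / e) := by
        rw [← Real.logb_mul (by positivity) (by positivity)]
        congr 1
        field_simp
      rw [← this, mul_add]
    · have hc' : 0 < c := hc.lt_of_ne (Ne.symm hc0)
      have hC' := hC hc0
      have hb' : 0 < a + c := by positivity
      have e1 : Real.logb 2 (a / A / e) = Real.logb 2 a - Real.logb 2 A - Real.logb 2 e := by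
        rw [Real.logb_div (by positivity) (by positivity),
          Real.logb_div (by positivity) (by positivity)]
      have e2 : Real.logb 2 (c / C / e) = Real.logb 2 c - Real.logb 2 C - Real.logb 2 e := by
        rw [Real.logb_div (by positivity) (by positivity),
          Real.logb_div (by positivity) (by positivity)]
      have e3 : Real.logb 2 ((a + c) / B / e)
          = Real.logb 2 (a + c) - Real.logb 2 B - Real.logb 2 e := by
        rw [Real.logb_div (by positivity) (by positivity),
          Real.logb_div (by positivity) (by positivity)]
      have e4 : Real.logb 2 (B / A) = Real.logb 2 B - Real.logb 2 A :=
        Real.logb_div (by positivity) (by positivity)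
      have e5 : Real.logb 2 (B / C) = Real.logb 2 B - Real.logb 2 C :=
        Real.logb_div (by positivity) (by positivity)
      have m1 : Real.logb 2 a ≤ Real.logb 2 (a + c) :=
        Real.logb_le_logb_of_le (by norm_num) (by linarith) (by linarith)
      have m2 : Real.logb 2 c ≤ Real.logb 2 (a + c) :=
        Real.logb_le_logb_of_le (by norm_num) (by linarith) (by linarith)
      rw [e1, e2, e3, e4, e5]
      nlinarith [mul_le_mul_of_nonneg_left m1 ha'.le, mul_le_mul_of_nonneg_left m2 hc'.le]

/-- Per-fiber inequality: splitting off the event changes the KL sum by at most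
the conditional-entropy correction terms. -/
lemma perY_aux {S : Type*} [Fintype S] (a b η : S → ℝ) (A B : ℝ)
    (ha : ∀ s, 0 ≤ a s) (hab : ∀ s, a s ≤ b s)
    (hA : A = ∑ s, a s) (hB : B = ∑ s, b s)
    (hη0 : ∀ s, 0 ≤ η s) (hη1 : (∑ s, η s) = 1)
    (hηpos : ∀ s, b s ≠ 0 → 0 < η s) :
    ∑ s, a s * Real.logb 2 (a s / A / η s) ≤
      ∑ s, b s * Real.logb 2 (b s / B / η s) + A * Real.logb 2 (B / A)
        + (B - A) * Real.logb 2 (B / (B - A)) := by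
  set c : S → ℝ := fun s => b s - a s with hcdef
  have hc0 : ∀ s, 0 ≤ c s := fun s => sub_nonneg.2 (hab s)
  have hCsum : B - A = ∑ s, c s := by
    rw [hA, hB, ← Finset.sum_sub_distrib]
  have hApos : ∀ s, a s ≠ 0 → 0 < A := by
    intro s hs
    have h1 : 0 < a s := (ha s).lt_of_ne (Ne.symm hs)
    have h2 : a s ≤ A := hA ▸ Finset.single_le_sum (fun t _ => ha t) (Finset.mem_univ s)
    linarith
  have hCpos : ∀ s, c s ≠ 0 → 0 < B - A := by
    intro s hs
    have h1 : 0 < c s := (hc0 s).lt_of_ne (Ne.symm hs)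
    have h2 : c s ≤ B - A := hCsum ▸ Finset.single_le_sum (fun t _ => hc0 t) (Finset.mem_univ s)
    linarith
  have hb0 : ∀ s, 0 ≤ b s := fun s => (ha s).trans (hab s)
  have hBpos : ∀ s, b s ≠ 0 → 0 < B := by
    intro s hs
    have h1 : 0 < b s := (hb0 s).lt_of_ne (Ne.symm hs)
    have h2 : b s ≤ B := hB ▸ Finset.single_le_sum (fun t _ => hb0 t) (Finset.mem_univ s)
    linarith
  have hac : ∀ s, a s + c s = b s := fun s => by simp [hcdef]
  have hpt : ∀ s ∈ Finset.univ (α := S),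
      a s * Real.logb 2 (a s / A / η s) + c s * Real.logb 2 (c s / (B - A) / η s) ≤
        b s * Real.logb 2 (b s / B / η s) + a s * Real.logb 2 (B / A)
          + c s * Real.logb 2 (B / (B - A)) := by
    intro s _
    have h := pt_aux (a s) (c s) A (B - A) B (η s) (ha s) (hc0 s) (hApos s) (hCpos s)
      (fun h => hBpos s (by rwa [hac s] at h)) (fun h => hηpos s (by rwa [hac s] at h))
    rwa [hac s] at h
  have hsumle := Finset.sum_le_sum hpt
  rw [Finset.sum_add_distrib] at hsumle
  have hre : ∑ s, (b s * Real.logb 2 (b s / B / η s) + a s * Real.logb 2 (B / A)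
      + c s * Real.logb 2 (B / (B - A)))
      = ∑ s, b s * Real.logb 2 (b s / B / η s) + A * Real.logb 2 (B / A)
        + (B - A) * Real.logb 2 (B / (B - A)) := by
    rw [Finset.sum_add_distrib, Finset.sum_add_distrib, ← Finset.sum_mul, ← Finset.sum_mul,
      ← hA, ← hCsum]
  rw [hre] at hsumle
  have hgibbs : 0 ≤ ∑ s, c s * Real.logb 2 (c s / (B - A) / η s) := by
    have := gibbs_aux c η hc0 hη0 hη1 (fun s hs => hηpos s (by
      intro hbs
      exact hs (by simp [hcdef, hbs, le_antisymm (hbs ▸ hab s) (ha s)] )))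
    rwa [← hCsum] at this
  linarith

/-- Partition of a set by the fibers of a finitely-valued function. -/
lemma part_aux {Ω S : Type*} [MeasurableSpace Ω] [Fintype S] (π : Measure Ω)
    (X : Ω → S) (hX : ∀ s, MeasurableSet {ω | X ω = s}) (C : Set Ω) :
    ∑ s, π ({ω | X ω = s} ∩ C) = π C := by
  have h1 : ∀ s : S, π ({ω | X ω = s} ∩ C) = (π.restrict C) (X ⁻¹' {s}) := by
    intro s
    have : X ⁻¹' {s} = {ω | X ω = s} := by ext ω; simp [Set.mem_preimage]
    rw [this, Measure.restrict_apply (hX s)]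
  simp only [h1]
  rw [MeasureTheory.sum_measure_preimage_singleton Finset.univ (fun s _ => hX s)]
  simp [Measure.restrict_apply_univ]

/-- Real-valued version of `part_aux`. -/
lemma part_aux' {Ω S : Type*} [MeasurableSpace Ω] [Fintype S] (π : Measure Ω)
    [IsFiniteMeasure π] (X : Ω → S) (hX : ∀ s, MeasurableSet {ω | X ω = s}) (C : Set Ω) :
    ∑ s, (π ({ω | X ω = s} ∩ C)).toReal = (π C).toReal := by
  rw [← ENNReal.toReal_sum (fun s _ => measure_ne_top π _), part_aux π X hX C]

/-- **Expected KL divergence under conditioning on an event.**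
Let `X, Y` be finitely-valued random variables, `E` an event with `π(E) > 0`, and `η` a
probability distribution positive on the support of the law of `X`.  Then
`E_{y ∼ π(Y | E)}[ D(law of X given (Y = y and E) ∥ η) ]
  ≤ (1/π(E))·( E_{y ∼ π(Y)}[ D(law of X given Y = y ∥ η) ] + H(π(E)) )`. -/
theorem stmt13 {Ω S T : Type*} [MeasurableSpace Ω] [Fintype S] [Fintype T]
    (π : Measure Ω) [IsProbabilityMeasure π]
    (X : Ω → S) (Y : Ω → T)
    (hX : ∀ s, MeasurableSet {ω | X ω = s}) (hY : ∀ y, MeasurableSet {ω | Y ω = y})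
    (E : Set Ω) (hE : MeasurableSet E) (hE0 : π E ≠ 0)
    (η : S → ℝ) (hη0 : ∀ s, 0 ≤ η s) (hη1 : (∑ s, η s) = 1)
    (hηpos : ∀ s, π {ω | X ω = s} ≠ 0 → 0 < η s) :
    (∑ y : T, ((π[|E]) {ω | Y ω = y}).toReal *
        klDiv2 (fun s => ((π[|({ω | Y ω = y} ∩ E)]) {ω | X ω = s}).toReal) η) ≤
      (1 / (π E).toReal) *
        ((∑ y : T, (π {ω | Y ω = y}).toReal *
            klDiv2 (fun s => ((π[|{ω | Y ω = y}]) {ω | X ω = s}).toReal) η) +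
          binEnt (π E).toReal) := by
  classical
  have hfin : ∀ U : Set Ω, π U ≠ ⊤ := fun U => measure_ne_top π U
  set p := (π E).toReal with hpdef
  have hp0 : 0 < p := ENNReal.toReal_pos hE0 (hfin E)
  set a : T → S → ℝ := fun y s => (π ({ω | X ω = s} ∩ ({ω | Y ω = y} ∩ E))).toReal
    with hadef
  set A : T → ℝ := fun y => (π ({ω | Y ω = y} ∩ E)).toReal with hAdef
  set b : T → S → ℝ := fun y s => (π ({ω | X ω = s} ∩ {ω | Y ω = y})).toReal with hbdef
  set B : T → ℝ := fun y => (π {ω | Y ω = y}).toReal with hBdef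
  have ha0 : ∀ y s, 0 ≤ a y s := fun y s => ENNReal.toReal_nonneg
  have hA0 : ∀ y, 0 ≤ A y := fun y => ENNReal.toReal_nonneg
  have hB0 : ∀ y, 0 ≤ B y := fun y => ENNReal.toReal_nonneg
  have hab : ∀ y s, a y s ≤ b y s := fun y s =>
    ENNReal.toReal_mono (hfin _)
      (measure_mono (Set.inter_subset_inter_right _ Set.inter_subset_left))
  have hABle : ∀ y, A y ≤ B y := fun y =>
    ENNReal.toReal_mono (hfin _) (measure_mono Set.inter_subset_left)
  have hAsum : ∀ y, A y = ∑ s, a y s := fun y => (part_aux' π X hX _).symm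
  have hBsum : ∀ y, B y = ∑ s, b y s := fun y => (part_aux' π X hX _).symm
  have hpsum : ∑ y, A y = p := part_aux' π Y hY E
  have h1sum : ∑ y, B y = 1 := by
    have h := part_aux' π Y hY Set.univ
    simpa using h
  have hηb : ∀ y s, b y s ≠ 0 → 0 < η s := by
    intro y s hb
    refine hηpos s fun h0 => hb ?_
    rw [hbdef]
    simp [measure_mono_null Set.inter_subset_left h0]
  have hcondE : ∀ y, ((π[|E]) {ω | Y ω = y}).toReal = p⁻¹ * A y := by
    intro y
    rw [ProbabilityTheory.cond_apply hE, ENNReal.toReal_mul, ENNReal.toReal_inv,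
      Set.inter_comm E]
  have hL : ∀ y, ((π[|E]) {ω | Y ω = y}).toReal *
      klDiv2 (fun s => ((π[|({ω | Y ω = y} ∩ E)]) {ω | X ω = s}).toReal) η
      = p⁻¹ * ∑ s, a y s * Real.logb 2 (a y s / A y / η s) := by
    intro y
    by_cases hy : π ({ω | Y ω = y} ∩ E) = 0
    · have hAz : A y = 0 := by rw [hAdef]; simp [hy]
      have haz : ∀ s, a y s = 0 := fun s => by
        rw [hadef]; simp [measure_mono_null Set.inter_subset_right hy]
      rw [hcondE y, hAz, mul_zero, zero_mul]
      symm
      rw [mul_eq_zero]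
      exact Or.inr (Finset.sum_eq_zero fun s _ => by rw [haz s, zero_mul])
    · have hAy : 0 < A y := ENNReal.toReal_pos hy (hfin _)
      have hval : ∀ s, ((π[|({ω | Y ω = y} ∩ E)]) {ω | X ω = s}).toReal = a y s / A y := by
        intro s
        rw [ProbabilityTheory.cond_apply ((hY y).inter hE), ENNReal.toReal_mul,
          ENNReal.toReal_inv, Set.inter_comm ({ω | Y ω = y} ∩ E), inv_mul_eq_div]
      rw [hcondE y]
      simp only [klDiv2, hval]
      rw [Finset.mul_sum, Finset.mul_sum]
      refine Finset.sum_congr rfl fun s _ => ?_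
      generalize Real.logb 2 (a y s / A y / η s) = L
      have hAne : A y ≠ 0 := ne_of_gt hAy
      field_simp
  have hR : ∀ y, (π {ω | Y ω = y}).toReal *
      klDiv2 (fun s => ((π[|{ω | Y ω = y}]) {ω | X ω = s}).toReal) η
      = ∑ s, b y s * Real.logb 2 (b y s / B y / η s) := by
    intro y
    by_cases hy : π {ω | Y ω = y} = 0
    · have hBz : B y = 0 := by rw [hBdef]; simp [hy]
      have hbz : ∀ s, b y s = 0 := fun s => by
        rw [hbdef]; simp [measure_mono_null Set.inter_subset_right hy]
      rw [show (π {ω | Y ω = y}).toReal = B y from rfl, hBz, zero_mul]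
      exact (Finset.sum_eq_zero fun s _ => by rw [hbz s, zero_mul]).symm
    · have hBy : 0 < B y := ENNReal.toReal_pos hy (hfin _)
      have hval : ∀ s, ((π[|{ω | Y ω = y}]) {ω | X ω = s}).toReal = b y s / B y := by
        intro s
        rw [ProbabilityTheory.cond_apply (hY y), ENNReal.toReal_mul,
          ENNReal.toReal_inv, Set.inter_comm {ω | Y ω = y}, inv_mul_eq_div]
      rw [show (π {ω | Y ω = y}).toReal = B y from rfl]
      simp only [klDiv2, hval]
      rw [Finset.mul_sum]
      refine Finset.sum_congr rfl fun s _ => ?_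
      generalize Real.logb 2 (b y s / B y / η s) = L
      have hBne : B y ≠ 0 := ne_of_gt hBy
      field_simp
  simp only [hL, hR]
  rw [← Finset.mul_sum, one_div]
  refine mul_le_mul_of_nonneg_left ?_ (by positivity)
  -- core inequality
  have hyle : ∀ y ∈ Finset.univ (α := T),
      (∑ s, a y s * Real.logb 2 (a y s / A y / η s)) ≤
        (∑ s, b y s * Real.logb 2 (b y s / B y / η s)) + A y * Real.logb 2 (B y / A y)
          + (B y - A y) * Real.logb 2 (B y / (B y - A y)) :=
    fun y _ => perY_aux (a y) (b y) η (A y) (B y) (ha0 y) (hab y) (hAsum y) (hBsum y)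
      hη0 hη1 (hηb y)
  have h2 := Finset.sum_le_sum hyle
  rw [Finset.sum_add_distrib, Finset.sum_add_distrib] at h2
  have l1 : ∑ y, A y * Real.logb 2 (B y / A y) ≤ p * Real.logb 2 (1 / p) := by
    have h := logsum_aux A B hA0 hB0 (fun y hy =>
      lt_of_lt_of_le ((hA0 y).lt_of_ne (Ne.symm hy)) (hABle y))
    rwa [hpsum, h1sum] at h
  have l2 : ∑ y, (B y - A y) * Real.logb 2 (B y / (B y - A y)) ≤
      (1 - p) * Real.logb 2 (1 / (1 - p)) := by
    have h := logsum_aux (fun y => B y - A y) B (fun y => sub_nonneg.2 (hABle y)) hB0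
      (fun y hy => by
        have h1 : 0 < B y - A y := (sub_nonneg.2 (hABle y)).lt_of_ne (Ne.symm hy)
        have h2 := hA0 y
        linarith)
    rw [Finset.sum_sub_distrib, hpsum, h1sum] at h
    exact h
  have hbe : binEnt p = p * Real.logb 2 (1 / p) + (1 - p) * Real.logb 2 (1 / (1 - p)) := rfl
  rw [hbe]
  linarith
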